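/- arXiv:2106.12868 — 4 statements merged into one kernel-verified Lean document; each statement's English description precedes it below -/
import Mathlib

section
/- If K is a Kripke lattice model with all R_a equivalence relations, then in the H-transform H(K), each Π_a(w_X) = I_a(π_a(w_X)) satisfies Generalized Reflexivity: w_X ∈ (Π_a(w_X))↑, where upward closure is taken with respect to the projections r^{W_X}_{W_Y}(w_X) = w_Y. -/
variable {W At : Type}

/-- Downwards: `π(w_X) = w_Y` for some `Y ⊆ X`. -/
def Downwards (π : W × Set At → W × Set At) : Prop :=
  ∀ (w : W) (X : Set At), ∃ Y : Set At, Y ⊆ X ∧ π (w, X) = (w, Y)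

/-- Introspective Idempotence: if `π(w_X) = w_Y`, then every `v_Y` in the information
cell `I(w_Y)` is mapped by `π` to some `u_Y ∈ I(w_Y)`. -/
def IntroIdem (R : W → W → Prop) (π : W × Set At → W × Set At) : Prop :=
  ∀ (w : W) (X Y : Set At), π (w, X) = (w, Y) →
    ∀ v : W, R w v → ∃ u : W, R w u ∧ π (v, Y) = (u, Y)

/-- No Surprises: if `π(w_X) = w_Z` then for all `Y ⊆ X`, `π(w_Y) = w_{Y ∩ Z}`. -/
def NoSurprises (π : W × Set At → W × Set At) : Prop :=
  ∀ (w : W) (X Z : Set At), π (w, X) = (w, Z) →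
    ∀ Y : Set At, Y ⊆ X → π (w, Y) = (w, Y ∩ Z)

/-- The information cell of a world `p = w_Y` of the restriction lattice:
`I(w_Y) = {v_Y : (w_Y, v_Y) ∈ R_Y}` where `(w_Y, v_Y) ∈ R_Y` iff `(w, v) ∈ R`. -/
def Icell (R : W → W → Prop) (p : W × Set At) : Set (W × Set At) :=
  {q | q.2 = p.2 ∧ R p.1 q.1}

/-- The possibility correspondence of the `H`-transform: `Π(w_X) = I(π(w_X))`. -/
def PiH (R : W → W → Prop) (π : W × Set At → W × Set At) (p : W × Set At) :
    Set (W × Set At) :=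
  Icell R (π p)

/-- Upward closure of a set `D` of lattice worlds based in the space `W_Y`
(with projections `r^{W_X}_{W_Y}(w_X) = w_Y`): `D↑ = {u_Z : Y ⊆ Z and u_Y ∈ D}`. -/
def upcl (Y : Set At) (D : Set (W × Set At)) : Set (W × Set At) :=
  {p | Y ⊆ p.2 ∧ (p.1, Y) ∈ D}

theorem Downwards.subset_of_apply_eq {π : W × Set At → W × Set At} (hD : Downwards π)
    {w : W} {X Y : Set At} (h : π (w, X) = (w, Y)) : Y ⊆ X := by
  obtain ⟨Y', hY'X, hπ⟩ := hD w X
  obtain rfl : Y' = Y := (Prod.mk.inj (hπ.symm.trans h)).2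
  exact hY'X

theorem mem_Icell_self {R : W → W → Prop} (hR : ∀ a, R a a) (p : W × Set At) :
    p ∈ Icell R p :=
  ⟨rfl, hR p.1⟩

theorem Htransform_genReflexivity_general (R : W → W → Prop) (π : W × Set At → W × Set At)
    (hD : Downwards π) (hEq : Equivalence R) :
    ∀ (w : W) (X Y : Set At), π (w, X) = (w, Y) →
      (w, X) ∈ upcl Y (PiH R π (w, X)) := by
  intro w X Y h
  refine ⟨hD.subset_of_apply_eq h, ?_⟩
  rw [PiH, h]
  exact mem_Icell_self hEq.refl (w, Y)

/-- If `K` is a Kripke lattice model with `R` an equivalence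
relation, then in the `H`-transform `H(K)` each `Π(w_X) = I(π(w_X))` satisfies
Generalized Reflexivity: `w_X ∈ (Π(w_X))↑`, the upward closure being taken with
respect to the projections `r^{W_X}_{W_Y}(w_X) = w_Y` (here `Π(w_X)` is based in the
space `W_Y` where `π(w_X) = w_Y`). -/
theorem Htransform_genReflexivity (R : W → W → Prop) (π : W × Set At → W × Set At)
    (hD : Downwards π) (hII : IntroIdem R π) (hNS : NoSurprises π)
    (hEq : Equivalence R) :
    ∀ (w : W) (X Y : Set At), π (w, X) = (w, Y) →
      (w, X) ∈ upcl Y (PiH R π (w, X)) :=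
  Htransform_genReflexivity_general R π hD hEq
end

section
/- If K is a Kripke lattice model with all R_a equivalence relations, then in the H-transform, Π_a satisfies Stationarity: if v ∈ Π_a(w_X) then Π_a(v) = Π_a(w_X). -/
variable {W At : Type}

/-!
By (D) and (II), `π` fixes every world of `Π(w_X) = I(w_Y)`: (II) sends `v_Y` to some `u_Y`,
and (D) forces `u = v`. Hence `Π(v_Y) = I(v_Y)`, which is `I(w_Y)` since `R` is an equivalence.
-/

theorem IntroIdem.map_eq_self_of_rel {R : W → W → Prop} {π : W × Set At → W × Set At}
    (hII : IntroIdem R π) (hD : Downwards π) {w v : W} {X Y : Set At}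
    (hπ : π (w, X) = (w, Y)) (hwv : R w v) : π (v, Y) = (v, Y) := by
  obtain ⟨u, -, hu⟩ := hII w X Y hπ v hwv
  obtain ⟨Y', -, hv⟩ := hD v Y
  obtain ⟨rfl, -⟩ := Prod.ext_iff.mp (hu.symm.trans hv)
  exact hu

theorem Icell_eq_of_rel {R : W → W → Prop} (hsymm : ∀ ⦃a b⦄, R a b → R b a)
    (htrans : ∀ ⦃a b c⦄, R a b → R b c → R a c) {w v : W} {Y : Set At} (hwv : R w v) :
    Icell R (v, Y) = Icell R (w, Y) := by
  ext ⟨u, Z⟩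
  exact and_congr_right fun _ => ⟨htrans hwv, htrans (hsymm hwv)⟩

theorem Htransform_stationarity_general (R : W → W → Prop) (π : W × Set At → W × Set At)
    (hD : Downwards π) (hII : IntroIdem R π)
    (hEq : Equivalence R) :
    ∀ (w : W) (X : Set At) (v : W × Set At), v ∈ PiH R π (w, X) →
      PiH R π v = PiH R π (w, X) := by
  rintro w X ⟨v, Z⟩ hv
  obtain ⟨Y, -, hπ⟩ := hD w X
  rw [PiH, hπ] at hv
  obtain ⟨rfl, hwv⟩ : Z = Y ∧ R w v := hv
  rw [PiH, PiH, hπ, hII.map_eq_self_of_rel hD hπ hwv]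
  exact Icell_eq_of_rel (R := R) (fun _ _ => hEq.symm) (fun _ _ _ => hEq.trans) hwv

/-- If `K` is a Kripke lattice model with `R` an equivalence
relation, then in the `H`-transform the possibility correspondence
`Π(w_X) = I(π(w_X))` satisfies Stationarity: if `v ∈ Π(w_X)` then `Π(v) = Π(w_X)`. -/
theorem Htransform_stationarity (R : W → W → Prop) (π : W × Set At → W × Set At)
    (hD : Downwards π) (hII : IntroIdem R π) (hNS : NoSurprises π)
    (hEq : Equivalence R) :
    ∀ (w : W) (X : Set At) (v : W × Set At), v ∈ PiH R π (w, X) →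
      PiH R π v = PiH R π (w, X) :=
  Htransform_stationarity_general R π hD hII hEq
end

section
/- If K is a Kripke lattice model with all R_a equivalence relations, then in the H-transform, Π_a satisfies Projections Preserve Ignorance: if Y ⊆ X then (Π_a(w_X))↑ ⊆ (Π_a(w_Y))↑. -/
/-! Both cells `Π(w_X)` and `Π(w_Y)` are the `R`-cell of `w`, taken in the spaces `W_{Zx}` and
`W_{Zy}`, so their upward closures differ only in the base space. By No Surprises
`Zy = Y ∩ Zx ⊆ Zx`, and upward closure is antitone in the base space. -/

variable {W At : Type}

theorem mem_upcl_Icell {R : W → W → Prop} {w : W} {Z : Set At} {p : W × Set At} :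
    p ∈ upcl Z (Icell R (w, Z)) ↔ Z ⊆ p.2 ∧ R w p.1 := by
  simp [upcl, Icell]

theorem upcl_Icell_anti {R : W → W → Prop} (w : W) {Z Z' : Set At} (h : Z' ⊆ Z) :
    upcl Z (Icell R (w, Z)) ⊆ upcl Z' (Icell R (w, Z')) := fun _ hp =>
  let ⟨hZ, hR⟩ := mem_upcl_Icell.1 hp
  mem_upcl_Icell.2 ⟨h.trans hZ, hR⟩

theorem NoSurprises.subset_of_subset {π : W × Set At → W × Set At} (hNS : NoSurprises π)
    {w : W} {X Y Zx Zy : Set At} (hYX : Y ⊆ X) (hx : π (w, X) = (w, Zx))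
    (hy : π (w, Y) = (w, Zy)) : Zy ⊆ Zx := by
  have hZy : Zy = Y ∩ Zx := (Prod.ext_iff.1 (hy.symm.trans (hNS w X Zx hx Y hYX))).2
  exact hZy ▸ Set.inter_subset_right

theorem Htransform_ppi_general (R : W → W → Prop) (π : W × Set At → W × Set At)
    (hNS : NoSurprises π) :
    ∀ (w : W) (X Y : Set At), Y ⊆ X →
      ∀ Zx Zy : Set At, π (w, X) = (w, Zx) → π (w, Y) = (w, Zy) →
        upcl Zx (PiH R π (w, X)) ⊆ upcl Zy (PiH R π (w, Y)) := by
  intro w X Y hYX Zx Zy hx hy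
  rw [PiH, PiH, hx, hy]
  exact upcl_Icell_anti w (hNS.subset_of_subset hYX hx hy)

/-- If `K` is a Kripke lattice model with `R` an equivalence
relation, then in the `H`-transform, `Π` satisfies Projections Preserve Ignorance:
if `Y ⊆ X` then `(Π(w_X))↑ ⊆ (Π(w_Y))↑` (where `Π(w_X) = I(π(w_X))` is based in the
space of `π(w_X)`, and similarly for `w_Y`). -/
theorem Htransform_ppi (R : W → W → Prop) (π : W × Set At → W × Set At)
    (hD : Downwards π) (hII : IntroIdem R π) (hNS : NoSurprises π)
    (hEq : Equivalence R) :
    ∀ (w : W) (X Y : Set At), Y ⊆ X →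
      ∀ Zx Zy : Set At, π (w, X) = (w, Zx) → π (w, Y) = (w, Zy) →
        upcl Zx (PiH R π (w, X)) ⊆ upcl Zy (PiH R π (w, Y)) :=
  Htransform_ppi_general R π hNS
end

section
/- If K is a Kripke lattice model with all R_a equivalence relations, then in the H-transform, Π_a satisfies Projections Preserve Knowledge: if Z ⊆ Y ⊆ X, w_X ∈ W_X and Π_a(w_X) ⊆ W_Y, then the Z-projection of Π_a(w_X) equals Π_a(w_Z). -/
variable {W At : Type}

theorem NoSurprises.apply_eq_self_of_subset {π : W × Set At → W × Set At}
    (hNS : NoSurprises π) {w : W} {X Y Z : Set At} (hπ : π (w, X) = (w, Y))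
    (hZY : Z ⊆ Y) (hYX : Y ⊆ X) : π (w, Z) = (w, Z) := by
  simpa only [Set.inter_eq_left.mpr hZY] using hNS w X Y hπ Z (hZY.trans hYX)

theorem projection_Icell (R : W → W → Prop) (w : W) (Y Z : Set At) :
    {q : W × Set At | q.2 = Z ∧ (q.1, Y) ∈ Icell R (w, Y)} = Icell R (w, Z) := by
  ext ⟨v, V⟩
  simp [Icell]

theorem Htransform_ppk_general (R : W → W → Prop) (π : W × Set At → W × Set At)
    (hNS : NoSurprises π) :
    ∀ (w : W) (X Y Z : Set At), Z ⊆ Y → Y ⊆ X → π (w, X) = (w, Y) →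
      {q : W × Set At | q.2 = Z ∧ (q.1, Y) ∈ PiH R π (w, X)} = PiH R π (w, Z) := by
  intro w X Y Z hZY hYX hπ
  rw [PiH, PiH, hπ, hNS.apply_eq_self_of_subset hπ hZY hYX]
  exact projection_Icell R w Y Z

/-- If `K` is a Kripke lattice model with `R` an equivalence
relation, then in the `H`-transform, `Π` satisfies Projections Preserve Knowledge:
if `Z ⊆ Y ⊆ X` and `Π(w_X) ⊆ W_Y` (i.e. `π(w_X) = w_Y`), then the `Z`-projection
`{x_Z : x_Y ∈ Π(w_X)}` of `Π(w_X)` equals `Π(w_Z)`. -/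
theorem Htransform_ppk (R : W → W → Prop) (π : W × Set At → W × Set At)
    (hD : Downwards π) (hII : IntroIdem R π) (hNS : NoSurprises π)
    (hEq : Equivalence R) :
    ∀ (w : W) (X Y Z : Set At), Z ⊆ Y → Y ⊆ X → π (w, X) = (w, Y) →
      {q : W × Set At | q.2 = Z ∧ (q.1, Y) ∈ PiH R π (w, X)} = PiH R π (w, Z) :=
  Htransform_ppk_general R π hNS
end
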